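/- (Generalized Snell's law, dot product form.) Let 1 < p_i, p_j < +∞, let ω_i, ω_j > 0, let F ⊆ ℝ^d be a polytope, and let a, c ∈ ℝ^d with a ∉ F and c ∉ F. Suppose b minimizes y ↦ ω_i‖y − a‖_{p_i} + ω_j‖c − y‖_{p_j} over y ∈ F, and let F_b be the face of F such that b ∈ relint(F_b). Then for every vector v ∈ L(aff(F_b)): ω_i ([(b − a)/‖b − a‖_{p_i}]°)·v = ω_j ([(c − b)/‖c − b‖_{p_j}]°)·v, where the polar vectors are taken with respect to p_i and p_j respectively; equivalently, ω_i ((b − a)°/‖(b − a)°‖_{p_i°})·v = ω_j ((c − b)°/‖(c − b)°‖_{p_j°})·v. -/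

import Mathlib

open scoped BigOperators

/-- The ℓ_p norm on ℝ^d for a real exponent p. -/
noncomputable def lpnorm {d : ℕ} (p : ℝ) (x : Fin d → ℝ) : ℝ :=
  (∑ k, |x k| ^ p) ^ (1 / p)

/-- The polar vector of `v` with respect to the ℓ_p norm. -/
noncomputable def polarVec {d : ℕ} (p : ℝ) (v : Fin d → ℝ) : Fin d → ℝ :=
  if v = 0 then 0
  else fun k => (|v k| / lpnorm p v) ^ (p - 1) * Real.sign (v k) * lpnorm p v

/-!
At an interior point `b` of the face `F_b`, every direction `v` of its affine span can be
followed a little both ways without leaving `F`, so `t ↦ ωᵢ‖b + tv − a‖ + ωⱼ‖c − b − tv‖` has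
a local minimum at `t = 0` and its derivative vanishes there. For `x ≠ 0` and `1 < p` the
ℓ_p norm is differentiable at `x` with gradient `(|x_k| / ‖x‖_p)^(p-1) sign x_k`; both polar
expressions of the statement are this gradient in disguise.
-/

open Real Finset Filter Topology Matrix

namespace Real

theorem sign_mul_abs (r : ℝ) : sign r * |r| = r := by
  rcases lt_trichotomy r 0 with h | rfl | h
  · rw [sign_of_neg h, abs_of_neg h]; ring
  · simp
  · rw [sign_of_pos h, abs_of_pos h, one_mul]

theorem sign_mul_of_pos {r y : ℝ} (hr : 0 < r) : sign (r * y) = sign y := by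
  rcases lt_trichotomy y 0 with h | rfl | h
  · rw [sign_of_neg h, sign_of_neg (mul_neg_of_pos_of_neg hr h)]
  · simp
  · rw [sign_of_pos h, sign_of_pos (mul_pos hr h)]

end Real

section LpNorm

variable {d : ℕ} {p : ℝ} {x : Fin d → ℝ}

noncomputable def lpnormGrad (p : ℝ) (x : Fin d → ℝ) : Fin d → ℝ :=
  fun k => (|x k| / lpnorm p x) ^ (p - 1) * Real.sign (x k)

theorem sum_abs_rpow_pos (hx : x ≠ 0) : 0 < ∑ k, |x k| ^ p := by
  obtain ⟨k, hk⟩ := Function.ne_iff.1 hx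
  exact sum_pos' (fun i _ => rpow_nonneg (abs_nonneg _) _)
    ⟨k, mem_univ k, rpow_pos_of_pos (abs_pos.2 hk) _⟩

theorem lpnorm_pos (hx : x ≠ 0) : 0 < lpnorm p x :=
  rpow_pos_of_pos (sum_abs_rpow_pos hx) _

theorem lpnorm_rpow (hp : p ≠ 0) (x : Fin d → ℝ) : lpnorm p x ^ p = ∑ k, |x k| ^ p := by
  rw [lpnorm, ← rpow_mul (sum_nonneg fun i _ => rpow_nonneg (abs_nonneg _) _),
    one_div, inv_mul_cancel₀ hp, rpow_one]

theorem lpnormGrad_apply_eq (hp : 1 < p) (hx : x ≠ 0) (k : Fin d) :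
    lpnormGrad p x k = (∑ j, |x j| ^ p) ^ (1 / p - 1) * (|x k| ^ (p - 2) * x k) := by
  have hs : 0 < ∑ j, |x j| ^ p := sum_abs_rpow_pos hx
  have hN : 0 < lpnorm p x := lpnorm_pos hx
  have hpow : (∑ j, |x j| ^ p) ^ (1 / p - 1) = (lpnorm p x ^ (p - 1))⁻¹ := by
    rw [lpnorm, ← rpow_mul hs.le, ← rpow_neg hs.le]
    congr 1
    field_simp
    ring
  rcases eq_or_ne (x k) 0 with h | h
  · simp [lpnormGrad, h, zero_rpow (by linarith : p - 1 ≠ 0)]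
  · have hsplit : |x k| ^ (p - 1) = |x k| ^ (p - 2) * |x k| := by
      rw [show p - 1 = (p - 2) + 1 by ring, rpow_add (abs_pos.2 h), rpow_one]
    calc lpnormGrad p x k
        = (lpnorm p x ^ (p - 1))⁻¹ * (|x k| ^ (p - 2) * (Real.sign (x k) * |x k|)) := by
          rw [lpnormGrad, div_rpow (abs_nonneg _) hN.le, hsplit]; ring
      _ = _ := by rw [Real.sign_mul_abs, hpow]

theorem hasDerivAt_lpnorm_add_smul (hp : 1 < p) (hx : x ≠ 0) (v : Fin d → ℝ) :
    HasDerivAt (fun t : ℝ => lpnorm p (x + t • v)) (lpnormGrad p x ⬝ᵥ v) 0 := by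
  set s : ℝ → ℝ := fun t => ∑ k, |x k + t * v k| ^ p
  have hs0 : s 0 = ∑ k, |x k| ^ p := by simp [s]
  have hsum : HasDerivAt s (∑ k, p * |x k| ^ (p - 2) * x k * v k) 0 := by
    refine HasDerivAt.fun_sum fun k _ => ?_
    have hline : HasDerivAt (fun t : ℝ => x k + t * v k) (v k) 0 := by
      simpa using (hasDerivAt_mul_const (v k)).const_add (x k)
    have habs : HasDerivAt (fun u : ℝ => |u| ^ p) (p * |x k| ^ (p - 2) * x k)
        ((fun t : ℝ => x k + t * v k) 0) := by
      simpa using hasDerivAt_abs_rpow (x k) hp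
    exact habs.comp 0 hline
  have hroot : HasDerivAt (fun u : ℝ => u ^ (1 / p)) (1 / p * s 0 ^ (1 / p - 1)) (s 0) :=
    hasDerivAt_rpow_const (Or.inl (hs0 ▸ sum_abs_rpow_pos hx).ne')
  have hcomp : HasDerivAt (fun t : ℝ => lpnorm p (x + t • v))
      (1 / p * s 0 ^ (1 / p - 1) * ∑ k, p * |x k| ^ (p - 2) * x k * v k) 0 := by
    simpa [lpnorm, s, Function.comp_def] using hroot.comp 0 hsum
  refine hcomp.congr_deriv ?_
  rw [hs0, dotProduct, mul_sum]
  refine sum_congr rfl fun k _ => ?_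
  rw [lpnormGrad_apply_eq hp hx]
  field_simp

theorem polarVec_inv_lpnorm_smul (hp : 1 < p) (hx : x ≠ 0) :
    polarVec p ((lpnorm p x)⁻¹ • x) = lpnormGrad p x := by
  have hN : 0 < lpnorm p x := lpnorm_pos hx
  set u : Fin d → ℝ := (lpnorm p x)⁻¹ • x
  have hu : u ≠ 0 := smul_ne_zero (inv_ne_zero hN.ne') hx
  have huk (k : Fin d) : u k = (lpnorm p x)⁻¹ * x k := rfl
  have habs (k : Fin d) : |u k| = (lpnorm p x)⁻¹ * |x k| := by
    rw [huk, abs_mul, abs_of_pos (inv_pos.2 hN)]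
  have hnorm : lpnorm p u = 1 := by
    have hterm (k : Fin d) : |u k| ^ p = (lpnorm p x ^ p)⁻¹ * |x k| ^ p := by
      rw [habs, mul_rpow (inv_nonneg.2 hN.le) (abs_nonneg _), inv_rpow hN.le]
    rw [lpnorm, sum_congr rfl fun k _ => hterm k, ← mul_sum, ← lpnorm_rpow (by positivity),
      inv_mul_cancel₀ (by positivity), one_rpow]
  funext k
  rw [polarVec, if_neg hu, hnorm, lpnormGrad, habs, huk,
    Real.sign_mul_of_pos (inv_pos.2 hN), div_one, mul_one, div_eq_inv_mul]

theorem lpnorm_polarVec (hp : 1 < p) (hx : x ≠ 0) :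
    lpnorm (p / (p - 1)) (polarVec p x) = lpnorm p x := by
  have hp1 : 0 < p - 1 := by linarith
  have hN : 0 < lpnorm p x := lpnorm_pos hx
  set N := lpnorm p x with hNdef
  set q := p / (p - 1) with hqdef
  have hq : 0 < q := by positivity
  have habs (k : Fin d) : |polarVec p x k| = (|x k| / N) ^ (p - 1) * N := by
    rw [polarVec, if_neg hx]
    rcases eq_or_ne (x k) 0 with h | h
    · simp [h, zero_rpow hp1.ne']
    · rw [abs_mul, abs_mul, abs_of_pos hN, abs_of_nonneg (by positivity)]
      rcases Real.sign_apply_eq_of_ne_zero (x k) h with hs | hs <;> simp [hs, N]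
  have hterm (k : Fin d) : |polarVec p x k| ^ q = |x k| ^ p / N ^ p * N ^ q := by
    have hexp : (p - 1) * q = p := by rw [hqdef]; field_simp
    rw [habs, mul_rpow (by positivity) hN.le, ← rpow_mul (by positivity), hexp,
      div_rpow (abs_nonneg _) hN.le]
  have hsum : ∑ k, |polarVec p x k| ^ q = N ^ q := by
    rw [sum_congr rfl fun k _ => hterm k, ← sum_mul, ← sum_div,
      ← lpnorm_rpow (by positivity) x, ← hNdef, div_self (by positivity), one_mul]
  rw [lpnorm, hsum, ← rpow_mul hN.le, mul_one_div_cancel hq.ne', rpow_one]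

theorem inv_lpnorm_polarVec_smul (hp : 1 < p) (hx : x ≠ 0) :
    (lpnorm (p / (p - 1)) (polarVec p x))⁻¹ • polarVec p x = lpnormGrad p x := by
  have hN : 0 < lpnorm p x := lpnorm_pos hx
  rw [lpnorm_polarVec hp hx]
  funext k
  rw [Pi.smul_apply, smul_eq_mul, polarVec, if_neg hx, lpnormGrad]
  field_simp

end LpNorm

theorem eventually_add_smul_mem_of_mem_intrinsicInterior {E : Type*} [NormedAddCommGroup E]
    [NormedSpace ℝ E] {s : Set E} {x v : E} (hx : x ∈ intrinsicInterior ℝ s)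
    (hv : v ∈ (affineSpan ℝ s).direction) : ∀ᶠ t in 𝓝 (0 : ℝ), x + t • v ∈ s := by
  obtain ⟨y, hy, rfl⟩ := mem_intrinsicInterior.mp hx
  let line : ℝ → affineSpan ℝ s := fun t =>
    ⟨y + t • v, by
      simpa [vadd_eq_add, add_comm] using
        AffineSubspace.vadd_mem_of_mem_direction (Submodule.smul_mem _ t hv) y.2⟩
  have hline : Continuous line :=
    (continuous_const.add (continuous_id.smul continuous_const)).subtype_mk _
  have hy0 : line 0 = y := Subtype.ext (by simp [line])
  have hnhds : line ⁻¹' interior ((↑) ⁻¹' s) ∈ 𝓝 (0 : ℝ) :=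
    hline.continuousAt.preimage_mem_nhds (hy0 ▸ isOpen_interior.mem_nhds hy)
  exact mem_of_superset hnhds fun t ht =>
    (interior_subset ht : line t ∈ ((↑) ⁻¹' s : Set (affineSpan ℝ s)))

theorem weighted_lpnormGrad_dotProduct_eq_of_eventually_le {d : ℕ} {pi pj ωi ωj : ℝ} (hpi : 1 < pi)
    (hpj : 1 < pj) {a b c v : Fin d → ℝ} (hba : b - a ≠ 0) (hcb : c - b ≠ 0)
    (hloc : ∀ᶠ t in 𝓝 (0 : ℝ),
      ωi * lpnorm pi (b - a) + ωj * lpnorm pj (c - b) ≤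
        ωi * lpnorm pi (b + t • v - a) + ωj * lpnorm pj (c - (b + t • v))) :
    ωi * (lpnormGrad pi (b - a) ⬝ᵥ v) = ωj * (lpnormGrad pj (c - b) ⬝ᵥ v) := by
  let cost : ℝ → ℝ := fun t =>
    ωi * lpnorm pi (b - a + t • v) + ωj * lpnorm pj (c - b + t • -v)
  have hderiv : HasDerivAt cost
      (ωi * (lpnormGrad pi (b - a) ⬝ᵥ v) + ωj * (lpnormGrad pj (c - b) ⬝ᵥ -v)) 0 :=
    ((hasDerivAt_lpnorm_add_smul hpi hba v).const_mul ωi).add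
      ((hasDerivAt_lpnorm_add_smul hpj hcb (-v)).const_mul ωj)
  have hmin : IsLocalMin cost 0 := hloc.mono fun t ht => by
    have h1 : b + t • v - a = b - a + t • v := by abel
    have h2 : c - (b + t • v) = c - b + t • -v := by rw [smul_neg]; abel
    simpa [cost, h1, h2] using ht
  have hzero := hmin.hasDerivAt_eq_zero hderiv
  rw [dotProduct_neg] at hzero
  linarith

theorem stmt_7_general {d : ℕ} (pi pj : ℝ) (hpi : 1 < pi) (hpj : 1 < pj)
    (ωi ωj : ℝ)
    (F : Set (Fin d → ℝ))
    (a c : Fin d → ℝ) (ha : a ∉ F) (hc : c ∉ F)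
    (b : Fin d → ℝ) (hbF : b ∈ F)
    (hmin : ∀ y ∈ F, ωi * lpnorm pi (b - a) + ωj * lpnorm pj (c - b) ≤
      ωi * lpnorm pi (y - a) + ωj * lpnorm pj (c - y))
    (Fb : Set (Fin d → ℝ)) (hFbface : IsExtreme ℝ F Fb)
    (hbrel : b ∈ intrinsicInterior ℝ Fb) :
    ∀ v : Fin d → ℝ,
      (∃ f ∈ (affineSpan ℝ Fb : Set (Fin d → ℝ)),
        ∃ g ∈ (affineSpan ℝ Fb : Set (Fin d → ℝ)), v = f - g) →
      (ωi * ∑ k, polarVec pi ((lpnorm pi (b - a))⁻¹ • (b - a)) k * v k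
          = ωj * ∑ k, polarVec pj ((lpnorm pj (c - b))⁻¹ • (c - b)) k * v k) ∧
      (ωi * ∑ k, ((lpnorm (pi / (pi - 1)) (polarVec pi (b - a)))⁻¹ • polarVec pi (b - a)) k * v k
          = ωj * ∑ k, ((lpnorm (pj / (pj - 1)) (polarVec pj (c - b)))⁻¹ • polarVec pj (c - b)) k * v k) := by
  rintro v ⟨f, hf, g, hg, rfl⟩
  have hba : b - a ≠ 0 := sub_ne_zero.2 fun h => ha (h ▸ hbF)
  have hcb : c - b ≠ 0 := sub_ne_zero.2 fun h => hc (h ▸ hbF)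
  have hline := eventually_add_smul_mem_of_mem_intrinsicInterior hbrel
    (AffineSubspace.vsub_mem_direction hf hg)
  have hsnell := weighted_lpnormGrad_dotProduct_eq_of_eventually_le hpi hpj hba hcb
    (hline.mono fun t ht => hmin _ (hFbface.subset ht))
  refine ⟨?_, ?_⟩
  · rw [polarVec_inv_lpnorm_smul hpi hba, polarVec_inv_lpnorm_smul hpj hcb]
    exact hsnell
  · rw [inv_lpnorm_polarVec_smul hpi hba, inv_lpnorm_polarVec_smul hpj hcb]
    exact hsnell

/-- Generalized Snell's law (Snell's-like local optimality criterion for gate points),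
dot product form. -/
theorem stmt_7 {d : ℕ} (pi pj : ℝ) (hpi : 1 < pi) (hpj : 1 < pj)
    (ωi ωj : ℝ) (hωi : 0 < ωi) (hωj : 0 < ωj)
    (S : Finset (Fin d → ℝ)) (F : Set (Fin d → ℝ))
    (hF : F = convexHull ℝ (S : Set (Fin d → ℝ)))
    (a c : Fin d → ℝ) (ha : a ∉ F) (hc : c ∉ F)
    (b : Fin d → ℝ) (hbF : b ∈ F)
    (hmin : ∀ y ∈ F, ωi * lpnorm pi (b - a) + ωj * lpnorm pj (c - b) ≤
      ωi * lpnorm pi (y - a) + ωj * lpnorm pj (c - y))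
    (Fb : Set (Fin d → ℝ)) (hFbconv : Convex ℝ Fb) (hFbface : IsExtreme ℝ F Fb)
    (hbrel : b ∈ intrinsicInterior ℝ Fb) :
    ∀ v : Fin d → ℝ,
      (∃ f ∈ (affineSpan ℝ Fb : Set (Fin d → ℝ)),
        ∃ g ∈ (affineSpan ℝ Fb : Set (Fin d → ℝ)), v = f - g) →
      (ωi * ∑ k, polarVec pi ((lpnorm pi (b - a))⁻¹ • (b - a)) k * v k
          = ωj * ∑ k, polarVec pj ((lpnorm pj (c - b))⁻¹ • (c - b)) k * v k) ∧
      (ωi * ∑ k, ((lpnorm (pi / (pi - 1)) (polarVec pi (b - a)))⁻¹ • polarVec pi (b - a)) k * v k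
          = ωj * ∑ k, ((lpnorm (pj / (pj - 1)) (polarVec pj (c - b)))⁻¹ • polarVec pj (c - b)) k * v k) :=
  stmt_7_general pi pj hpi hpj ωi ωj F a c ha hc b hbF hmin Fb hFbface hbrel
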